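/- Let (G,X) be an augmented birack. Then the map ∂_n : C_n(X) → C_{n−1}(X) defined by ∂_n(x⃗) = Σ_{k=1}^{n} (−1)^k (∂'_k(x⃗) − ∂''_k(x⃗)) is a boundary map, i.e. the composite ∂_{n−1} ∘ ∂_n : C_n(X) → C_{n−2}(X) is the zero map, so (C_n(X), ∂_n) is a chain complex. -/
import Mathlib


/-- An augmented birack: a set `X` with maps `a, b, abar, bbar : X → Perm X`
(written `α, β, ᾱ, β̄` in the paper) and a kink map `kink = π`, satisfying
the augmented birack axioms. -/
structure AugBirack (X : Type*) where
  a : X → Equiv.Perm X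
  b : X → Equiv.Perm X
  abar : X → Equiv.Perm X
  bbar : X → Equiv.Perm X
  kink : Equiv.Perm X
  axiom_i1 : ∀ x : X, a (kink x) x = b x (kink x)
  axiom_i2 : ∀ x : X, bbar (kink x) x = abar x (kink x)
  axiom_ii1 : ∀ x y : X, abar (b x y) (a y x) = x
  axiom_ii2 : ∀ x y : X, bbar (a x y) (b y x) = x
  axiom_ii3 : ∀ x y : X, a (bbar x y) (abar y x) = x
  axiom_ii4 : ∀ x y : X, b (abar x y) (bbar y x) = x
  axiom_iii1 : ∀ x y z : X, a (a x y) (a x z) = a (b y x) (a y z)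
  axiom_iii2 : ∀ x y z : X, b (a x y) (a x z) = a (b y x) (b y z)
  axiom_iii3 : ∀ x y z : X, b (a x y) (b x z) = b (b y x) (b y z)

/-- The chain group `C_n(X) = ℤ[X^n]`, the free abelian group on `n`-tuples. -/
abbrev ChainGrp (X : Type*) (n : ℕ) : Type _ := FreeAbelianGroup (Fin n → X)

/-- `∂'_k`: delete the `k`-th entry (0-indexed). -/
def faceDel (X : Type*) (n : ℕ) (k : Fin (n + 1)) : ChainGrp X (n + 1) →+ ChainGrp X n :=
  FreeAbelianGroup.map (fun f j => f (k.succAbove j))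

/-- `∂''_k`: delete the `k`-th entry, applying `β_{x_k}` (= `be (f k)`) to earlier
entries and `α_{x_k}` (= `al (f k)`) to later entries (0-indexed). -/
def faceAct {X : Type*} (al be : X → X → X) (n : ℕ) (k : Fin (n + 1)) :
    ChainGrp X (n + 1) →+ ChainGrp X n :=
  FreeAbelianGroup.map (fun f j =>
    if (j : ℕ) < (k : ℕ) then be (f k) (f (k.succAbove j))
    else al (f k) (f (k.succAbove j)))

/-- `∂''_k` for an augmented birack. -/
def faceBir {X : Type*} (B : AugBirack X) (n : ℕ) (k : Fin (n + 1)) :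
    ChainGrp X (n + 1) →+ ChainGrp X n :=
  faceAct (fun x y => B.a x y) (fun x y => B.b x y) n k

/-- The augmented birack boundary map `∂ = Σ (-1)^k (∂'_k - ∂''_k)` (here `k`
runs over `0, …, n`, corresponding to the paper's `1, …, n+1`, whence the
sign `(-1)^(k+1)`). -/
def abBoundary {X : Type*} (B : AugBirack X) (n : ℕ) : ChainGrp X (n + 1) →+ ChainGrp X n :=
  ∑ k : Fin (n + 1), ((-1 : ℤ) ^ ((k : ℕ) + 1)) • (faceDel X n k - faceBir B n k)


-- ### Helper lemmas on `Fin`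

lemma val_succAbove' {n : ℕ} (p : Fin (n+1)) (l : Fin n) :
    ((p.succAbove l : Fin (n+1)) : ℕ) = if (l:ℕ) < (p:ℕ) then (l:ℕ) else (l:ℕ)+1 := by
  rw [Fin.succAbove]
  split_ifs with h1 h2 h2 <;> simp [Fin.lt_def] at * <;> omega

lemma coreId {n : ℕ} (i : Fin (n+1)) (j : Fin (n+2)) (h : (i:ℕ) < (j:ℕ)) (hj : j ≠ 0)
    (l : Fin n) :
    j.succAbove (i.succAbove l) = (i.castSucc).succAbove ((j.pred hj).succAbove l) := by
  apply Fin.ext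
  rw [val_succAbove', val_succAbove', val_succAbove', val_succAbove']
  simp only [Fin.coe_castSucc, Fin.coe_pred]
  split_ifs <;> omega

lemma L4 {n : ℕ} (i : Fin (n+1)) (j : Fin (n+2)) (h : (i:ℕ) < (j:ℕ)) (hj : j ≠ 0) :
    (i.castSucc).succAbove (j.pred hj) = j := by
  apply Fin.ext
  rw [val_succAbove']
  simp only [Fin.coe_castSucc, Fin.coe_pred]
  split_ifs <;> omega

lemma L5 {n : ℕ} (i : Fin (n+1)) (j : Fin (n+2)) (h : (i:ℕ) < (j:ℕ)) :
    j.succAbove i = i.castSucc := by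
  apply Fin.ext
  rw [val_succAbove']
  simp only [Fin.coe_castSucc]
  split_ifs <;> omega

-- ### Helper lemmas on `AddMonoidHom` composition

section HomAlg
variable {A B C : Type*} [AddCommGroup A] [AddCommGroup B] [AddCommGroup C]

lemma comp_sub' (f : B →+ C) (g h : A →+ B) : f.comp (g - h) = f.comp g - f.comp h := by
  ext x; simp

lemma sub_comp' (f g : B →+ C) (h : A →+ B) : (f - g).comp h = f.comp h - g.comp h := by
  ext x; simp

lemma comp_zsmul' (f : B →+ C) (z : ℤ) (g : A →+ B) : f.comp (z • g) = z • f.comp g := by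
  ext x; simp

lemma zsmul_comp' (z : ℤ) (f : B →+ C) (g : A →+ B) : (z • f).comp g = z • f.comp g := by
  ext x; simp

lemma sum_comp' {ι : Type*} (s : Finset ι) (f : ι → (B →+ C)) (g : A →+ B) :
    (∑ i ∈ s, f i).comp g = ∑ i ∈ s, (f i).comp g := by
  ext x; simp

lemma comp_sum' {ι : Type*} (f : B →+ C) (s : Finset ι) (g : ι → (A →+ B)) :
    f.comp (∑ i ∈ s, g i) = ∑ i ∈ s, f.comp (g i) := by
  ext x; simp
end HomAlg

lemma sgn' (i j : ℕ) : ((-1:ℤ)^(i+1)) * ((-1:ℤ)^(j+1)) = (-1:ℤ)^(i+j) := by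
  rw [← pow_add, show i+1+(j+1) = (i+j)+2 by ring, pow_add]
  norm_num

-- ### The four face commutation relations

section Faces
variable {X : Type*} (B : AugBirack X) (n : ℕ)

lemma faceA (i : Fin (n+1)) (j : Fin (n+2)) (h : (i:ℕ) < (j:ℕ)) (hj : j ≠ 0) :
    (faceDel X n i).comp (faceDel X (n+1) j)
      = (faceDel X n (j.pred hj)).comp (faceDel X (n+1) i.castSucc) := by
  unfold faceDel
  rw [← FreeAbelianGroup.map_comp, ← FreeAbelianGroup.map_comp]
  congr 1
  funext f l
  simp only [Function.comp_apply]
  rw [coreId i j h hj l]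

lemma faceB (i : Fin (n+1)) (j : Fin (n+2)) (h : (i:ℕ) < (j:ℕ)) (hj : j ≠ 0) :
    (faceDel X n i).comp (faceBir B (n+1) j)
      = (faceBir B n (j.pred hj)).comp (faceDel X (n+1) i.castSucc) := by
  unfold faceDel faceBir faceAct
  rw [← FreeAbelianGroup.map_comp, ← FreeAbelianGroup.map_comp]
  congr 1
  funext f l
  simp only [Function.comp_apply]
  rw [coreId i j h hj l, L4 i j h hj]
  have h1 := val_succAbove' i l
  simp only [Fin.coe_pred]
  rw [h1]
  split_ifs <;> first | rfl | omega

lemma faceC (i : Fin (n+1)) (j : Fin (n+2)) (h : (i:ℕ) < (j:ℕ)) (hj : j ≠ 0) :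
    (faceBir B n i).comp (faceDel X (n+1) j)
      = (faceDel X n (j.pred hj)).comp (faceBir B (n+1) i.castSucc) := by
  unfold faceDel faceBir faceAct
  rw [← FreeAbelianGroup.map_comp, ← FreeAbelianGroup.map_comp]
  congr 1
  funext f l
  simp only [Function.comp_apply]
  rw [coreId i j h hj l, L5 i j h]
  have h2 := val_succAbove' (j.pred hj) l
  simp only [Fin.coe_pred] at h2
  simp only [Fin.coe_castSucc]
  rw [h2]
  split_ifs <;> first | rfl | omega

lemma faceD (i : Fin (n+1)) (j : Fin (n+2)) (h : (i:ℕ) < (j:ℕ)) (hj : j ≠ 0) :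
    (faceBir B n i).comp (faceBir B (n+1) j)
      = (faceBir B n (j.pred hj)).comp (faceBir B (n+1) i.castSucc) := by
  unfold faceBir faceAct
  rw [← FreeAbelianGroup.map_comp, ← FreeAbelianGroup.map_comp]
  congr 1
  funext f l
  simp only [Function.comp_apply]
  rw [coreId i j h hj l, L4 i j h hj, L5 i j h]
  have h1 := val_succAbove' i l
  have h2 := val_succAbove' (j.pred hj) l
  simp only [Fin.coe_pred] at h2
  simp only [Fin.coe_castSucc, Fin.coe_pred]
  rw [h1, h2]
  set u := f i.castSucc
  set v := f j
  set w := f ((i.castSucc).succAbove ((j.pred hj).succAbove l))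
  split_ifs <;>
    first
      | omega
      | exact (B.axiom_iii1 u v w).symm
      | exact (B.axiom_iii2 u v w).symm
      | exact (B.axiom_iii3 u v w).symm

/-- Combined swap lemma for `F_k = del_k - bir_k`. -/
lemma faceSwap (i : Fin (n+1)) (j : Fin (n+2)) (h : (i:ℕ) < (j:ℕ)) (hj : j ≠ 0) :
    (faceDel X n i - faceBir B n i).comp (faceDel X (n+1) j - faceBir B (n+1) j)
      = (faceDel X n (j.pred hj) - faceBir B n (j.pred hj)).comp
          (faceDel X (n+1) i.castSucc - faceBir B (n+1) i.castSucc) := by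
  simp only [comp_sub', sub_comp']
  rw [faceA n i j h hj, faceB B n i j h hj, faceC B n i j h hj, faceD B n i j h hj]
  abel
end Faces

lemma cancelPair {X : Type*} (B : AugBirack X) (n : ℕ)
    (p1 : Fin (n+1)) (p2 : Fin (n+2)) (q1 : Fin (n+1)) (q2 : Fin (n+2))
    (h : (p1:ℕ) < (p2:ℕ)) (hq1 : (q1:ℕ) = (p2:ℕ) - 1) (hq2 : (q2:ℕ) = (p1:ℕ)) :
    ((-1:ℤ)^((p1:ℕ)+(p2:ℕ))) •
        (faceDel X n p1 - faceBir B n p1).comp (faceDel X (n+1) p2 - faceBir B (n+1) p2)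
      + ((-1:ℤ)^((q1:ℕ)+(q2:ℕ))) •
        (faceDel X n q1 - faceBir B n q1).comp (faceDel X (n+1) q2 - faceBir B (n+1) q2)
      = 0 := by
  have hj : p2 ≠ 0 := by
    intro hz
    rw [hz] at h
    simp at h
  obtain rfl : q1 = p2.pred hj := by apply Fin.ext; simp [hq1]
  obtain rfl : q2 = p1.castSucc := by apply Fin.ext; simp [hq2]
  rw [faceSwap B n p1 p2 h hj, ← add_smul]
  have hz : ((-1:ℤ)^((p1:ℕ)+(p2:ℕ)))
      + ((-1:ℤ)^(((p2.pred hj : Fin (n+1)):ℕ)+((p1.castSucc : Fin (n+2)):ℕ))) = 0 := by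
    simp only [Fin.coe_pred, Fin.coe_castSucc]
    rw [show (p1:ℕ)+(p2:ℕ) = (((p2:ℕ)-1)+(p1:ℕ))+1 by omega, pow_succ]
    ring
  rw [hz, zero_smul]

set_option maxHeartbeats 1000000 in
/-- The augmented birack boundary map satisfies `∂ ∘ ∂ = 0`, so the chain
groups form a chain complex. -/
theorem stmt6 (X : Type*) (B : AugBirack X) (n : ℕ) :
    (abBoundary B n).comp (abBoundary B (n + 1)) = 0 := by
  classical
  unfold abBoundary
  rw [sum_comp']
  simp_rw [comp_sum', zsmul_comp', comp_zsmul', smul_smul, sgn']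
  rw [← Fintype.sum_prod_type']
  apply Finset.sum_ninvolution
    (g := fun (p : Fin (n+1) × Fin (n+2)) =>
      if h : (p.1 : ℕ) < (p.2 : ℕ) then
        ((⟨(p.2 : ℕ) - 1, by have := p.2.isLt; omega⟩ : Fin (n+1)),
         (⟨(p.1 : ℕ), by have := p.1.isLt; omega⟩ : Fin (n+2)))
      else
        ((⟨(p.2 : ℕ), by have := p.1.isLt; omega⟩ : Fin (n+1)),
         (⟨(p.1 : ℕ) + 1, by have := p.1.isLt; omega⟩ : Fin (n+2))))
  · -- f a + f (g a) = 0
    intro p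
    by_cases h : (p.1 : ℕ) < (p.2 : ℕ)
    · rw [dif_pos h]
      exact cancelPair B n p.1 p.2 _ _ h (by simp) (by simp)
    · rw [dif_neg h]
      dsimp only
      have hc := cancelPair B n
        (⟨(p.2 : ℕ), by have := p.1.isLt; omega⟩ : Fin (n+1))
        (⟨(p.1 : ℕ) + 1, by have := p.1.isLt; omega⟩ : Fin (n+2))
        p.1 p.2 (by simp; omega) (by simp) (by simp)
      exact (add_comm _ _).trans hc
  · -- g a ≠ a
    intro p _
    by_cases h : (p.1 : ℕ) < (p.2 : ℕ)
    · rw [dif_pos h]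
      intro hq
      have h2 := congrArg (fun q : Fin (n+1) × Fin (n+2) => (q.2 : ℕ)) hq
      simp at h2
      omega
    · rw [dif_neg h]
      intro hq
      have h2 := congrArg (fun q : Fin (n+1) × Fin (n+2) => (q.2 : ℕ)) hq
      simp at h2
      omega
  · -- g a ∈ s
    intro p
    exact Finset.mem_univ _
  · -- g (g a) = a
    intro p
    by_cases h : (p.1 : ℕ) < (p.2 : ℕ)
    · rw [dif_pos h, dif_neg (by simp; omega)]
      apply Prod.ext <;> apply Fin.ext <;> simp <;> omega
    · rw [dif_neg h, dif_pos (by simp; omega)]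
      apply Prod.ext <;> apply Fin.ext <;> simp
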